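/- Let Γ and Γ' be distinct flows of 𝓕_i(a_1,…,a_q; b_1,…,b_q), with edges (s_1,t_1),…,(s_r,t_r) and (s'_1,t'_1),…,(s'_{r'},t'_{r'}) respectively, ordered so that t_1 > … > t_r and t'_1 > … > t'_{r'}. Then neither of these two edge sequences is a proper initial segment of the other, and at the least index l with (s_l,t_l) ≠ (s'_l,t'_l) one has t_l = t'_l and s_l ≠ s'_l. Consequently, declaring Γ < Γ' if and only if s_l > s'_l defines a strict linear order on 𝓕_i(a_1,…,a_q; b_1,…,b_q). -/

import Mathlib

open Finset

/-- A "flow graph" is a finite set of directed edges with integer vertices. -/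
abbrev FlowGraph : Type := Finset (ℤ × ℤ)

/-- The edges of `E` beginning at `r`. -/
def beginsAt (E : FlowGraph) (r : ℤ) : Finset (ℤ × ℤ) := E.filter (fun e => e.1 = r)

/-- The edges of `E` ending at `r`. -/
def endsAt (E : FlowGraph) (r : ℤ) : Finset (ℤ × ℤ) := E.filter (fun e => e.2 = r)

/-- `E` is a flow with set of sources `A` and set of sinks `B`:
every edge `(s,t)` has `s < t`; the sources and sinks are pairwise distinct;
exactly one edge begins at each source (and none ends there); exactly one edge
ends at each sink (and none begins there); and every other vertex either meets
no edge, or exactly one edge ends at it and exactly one edge begins at it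
(such a vertex is a transit point). -/
structure IsFlow (E : FlowGraph) (A B : Finset ℤ) : Prop where
  edge_lt : ∀ e ∈ E, e.1 < e.2
  disjAB : Disjoint A B
  source_out : ∀ a ∈ A, (beginsAt E a).card = 1
  source_in : ∀ a ∈ A, endsAt E a = ∅
  sink_in : ∀ b ∈ B, (endsAt E b).card = 1
  sink_out : ∀ b ∈ B, beginsAt E b = ∅
  transit : ∀ r : ℤ, r ∉ A → r ∉ B →
      (beginsAt E r = ∅ ∧ endsAt E r = ∅) ∨
      ((beginsAt E r).card = 1 ∧ (endsAt E r).card = 1)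

/-- The set of transit points of the flow `E` with sources `A` and sinks `B`:
the vertices meeting some edge which are neither sources nor sinks. -/
def transitSet (E : FlowGraph) (A B : Finset ℤ) : Finset ℤ :=
  ((E.image Prod.fst) ∪ (E.image Prod.snd)) \ (A ∪ B)

def IsTransitPoint (E : FlowGraph) (A B : Finset ℤ) (r : ℤ) : Prop :=
  r ∈ transitSet E A B

/-- Two vertices are linked if they lie in the same connected component of `E`. -/
def Linked (E : FlowGraph) (x y : ℤ) : Prop :=
  Relation.ReflTransGen (fun u v => (u, v) ∈ E ∨ (v, u) ∈ E) x y

/-- The finset of values of a family of integers. -/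
def srcSet {q : ℕ} (a : Fin q → ℤ) : Finset ℤ := Finset.image a Finset.univ

/-- Membership in `𝓕_i(a_1,…,a_q; b_1,…,b_q)` : a flow with sources the `a j`,
sinks the `b j`, and no transit point greater than `i`. -/
def InF {q : ℕ} (i : ℤ) (a b : Fin q → ℤ) (E : FlowGraph) : Prop :=
  IsFlow E (srcSet a) (srcSet b) ∧
  ∀ r : ℤ, IsTransitPoint E (srcSet a) (srcSet b) r → r ≤ i

/-- A list of edges ordered so that the ends are strictly decreasing. -/
def DescList (l : List (ℤ × ℤ)) : Prop := l.Pairwise (fun e f => f.2 < e.2)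

/-- The order on flows: `Γ < Γ'` iff, enumerating the edges of `Γ` and `Γ'` with
strictly decreasing ends, at the first index where the enumerations differ the
edge of `Γ` has a strictly larger beginning than the edge of `Γ'`. -/
def FlowLt (E E' : FlowGraph) : Prop :=
  ∃ (u v v' : List (ℤ × ℤ)) (e e' : ℤ × ℤ),
    DescList (u ++ e :: v) ∧ DescList (u ++ e' :: v') ∧
    (u ++ e :: v).toFinset = E ∧ (u ++ e' :: v').toFinset = E' ∧
    e'.1 < e.1

/-!
Enumerate the edges of a flow by decreasing end; since no two edges of a flow share an end,
this enumeration is unique. Let two flows `Γ, Γ'` with the same sources and sinks have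
enumerations agreeing on an initial segment `u`, and let `e` be the next edge of `Γ`, ending
at `t`. Then `t` is not a source. If `t` is a sink, `Γ'` has an edge ending at `t`. Otherwise `t`
is a transit point of `Γ`; the edge of `Γ` leaving `t` ends after `t`, so it lies in `u ⊆ Γ'`,
and `t` is a transit point of `Γ'` too. Either way `Γ'` has an edge ending at `t`, and it is not
in `u`: so `Γ'` has a next edge, ending at `t` or later. By symmetry neither enumeration is an
initial segment of the other and the first differing edges have the same end, hence different
beginnings; comparing these beginnings orders any two distinct flows.
-/

namespace List

variable {α : Type*}

theorem prefix_or_prefix_or_exists_ne (l l' : List α) :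
    l <+: l' ∨ l' <+: l ∨ ∃ u e v e' v', l = u ++ e :: v ∧ l' = u ++ e' :: v' ∧ e ≠ e' := by
  induction l generalizing l' with
  | nil => exact Or.inl nil_prefix
  | cons x xs ih =>
    cases l' with
    | nil => exact Or.inr (Or.inl nil_prefix)
    | cons y ys =>
      by_cases hxy : x = y
      · subst hxy
        rcases ih ys with h | h | ⟨u, e, v, e', v', rfl, rfl, hne⟩
        · exact Or.inl (cons_prefix_cons.mpr ⟨rfl, h⟩)
        · exact Or.inr (Or.inl (cons_prefix_cons.mpr ⟨rfl, h⟩))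
        · exact Or.inr (Or.inr ⟨x :: u, e, v, e', v', rfl, rfl, hne⟩)
      · exact Or.inr (Or.inr ⟨[], x, xs, y, ys, rfl, rfl, hxy⟩)

theorem append_cons_eq_append_cons {u v w x : List α} {e f : α}
    (h : u ++ e :: v = w ++ f :: x) :
    (u = w ∧ e = f) ∨ (∃ m, w = u ++ e :: m) ∨ ∃ m, u = w ++ f :: m := by
  rcases append_eq_append_iff.mp h with ⟨_ | ⟨g, m⟩, rfl, hm⟩ | ⟨_ | ⟨g, m⟩, rfl, hm⟩ <;>
    simp_all

end List

namespace DescList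

variable {l l' u v : List (ℤ × ℤ)} {e f : ℤ × ℤ}

theorem nodup (h : DescList l) : l.Nodup :=
  h.imp fun hlt => ne_of_apply_ne Prod.snd hlt.ne'

theorem eq_of_toFinset_eq (h : DescList l) (h' : DescList l')
    (hll' : l.toFinset = l'.toFinset) : l = l' :=
  (List.perm_of_nodup_nodup_toFinset_eq h.nodup h'.nodup hll').eq_of_pairwise
    (fun _ _ _ _ hlt hgt => absurd (hlt.trans hgt) (lt_irrefl _)) h h'

theorem snd_lt_of_mem_left (h : DescList (u ++ e :: v)) (hf : f ∈ u) : e.2 < f.2 :=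
  (List.pairwise_append.mp h).2.2 f hf e List.mem_cons_self

theorem snd_le_of_mem_right (h : DescList (u ++ e :: v)) (hf : f ∈ e :: v) : f.2 ≤ e.2 := by
  rcases List.mem_cons.mp hf with rfl | hf
  · exact le_rfl
  · exact ((List.pairwise_cons.mp (List.pairwise_append.mp h).2.1).1 f hf).le

theorem mem_left_of_snd_lt (h : DescList (u ++ e :: v)) (hf : f ∈ u ++ e :: v)
    (hlt : e.2 < f.2) : f ∈ u :=
  (List.mem_append.mp hf).resolve_right fun hf' => (h.snd_le_of_mem_right hf').not_gt hlt

end DescList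

theorem exists_descList_toFinset_eq {E : FlowGraph} (hE : Set.InjOn Prod.snd (E : Set (ℤ × ℤ))) :
    ∃ l, DescList l ∧ l.toFinset = E := by
  let l := E.toList.mergeSort fun e f => decide (f.2 ≤ e.2)
  have hmem : ∀ {x}, x ∈ l ↔ x ∈ E := by simp [l]
  have hsorted : l.Pairwise fun e f => f.2 ≤ e.2 := by
    simpa using List.pairwise_mergeSort (le := fun e f : ℤ × ℤ => decide (f.2 ≤ e.2))
      (fun _ _ _ h₁ h₂ => by simp only [decide_eq_true_eq] at *; omega)
      (fun _ _ => by simp only [Bool.or_eq_true, decide_eq_true_eq]; omega) E.toList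
  have hnodup : l.Nodup := (List.mergeSort_perm _ _).nodup_iff.mpr E.nodup_toList
  refine ⟨l, (hsorted.and hnodup).imp_of_mem fun he hf ⟨hle, hne⟩ => ?_, by ext; simp [hmem]⟩
  exact hle.lt_of_ne fun h => hne (hE (hmem.mp hf) (hmem.mp he) h).symm

@[simp] theorem mem_beginsAt {E : FlowGraph} {r : ℤ} {e : ℤ × ℤ} :
    e ∈ beginsAt E r ↔ e ∈ E ∧ e.1 = r :=
  mem_filter

@[simp] theorem mem_endsAt {E : FlowGraph} {r : ℤ} {e : ℤ × ℤ} :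
    e ∈ endsAt E r ↔ e ∈ E ∧ e.2 = r :=
  mem_filter

namespace IsFlow

variable {E E' : FlowGraph} {A B : Finset ℤ}

theorem card_endsAt_le_one (hE : IsFlow E A B) (r : ℤ) : (endsAt E r).card ≤ 1 := by
  by_cases hA : r ∈ A
  · simp [hE.source_in r hA]
  by_cases hB : r ∈ B
  · exact (hE.sink_in r hB).le
  rcases hE.transit r hA hB with ⟨-, h⟩ | ⟨-, h⟩
  · simp [h]
  · exact h.le

theorem injOn_snd (hE : IsFlow E A B) : Set.InjOn Prod.snd (E : Set (ℤ × ℤ)) :=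
  fun e he f hf h => card_le_one.mp (hE.card_endsAt_le_one e.2) e
    (mem_endsAt.mpr ⟨he, rfl⟩) f (mem_endsAt.mpr ⟨hf, h.symm⟩)

theorem exists_descList (hE : IsFlow E A B) : ∃ l, DescList l ∧ l.toFinset = E :=
  exists_descList_toFinset_eq hE.injOn_snd

theorem snd_notMem_sources (hE : IsFlow E A B) {e : ℤ × ℤ} (he : e ∈ E) : e.2 ∉ A :=
  fun hA => by simpa [he] using (hE.source_in e.2 hA).le (x := e)

theorem exists_snd_eq_of_mem_sinks (hE : IsFlow E A B) {r : ℤ} (hB : r ∈ B) :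
    ∃ f ∈ E, f.2 = r := by
  obtain ⟨f, hf⟩ := card_pos.mp (hE.sink_in r hB ▸ one_pos)
  exact ⟨f, mem_endsAt.mp hf⟩

theorem exists_fst_eq_snd (hE : IsFlow E A B) {e : ℤ × ℤ} (he : e ∈ E) (hB : e.2 ∉ B) :
    ∃ g ∈ E, g.1 = e.2 := by
  rcases hE.transit e.2 (hE.snd_notMem_sources he) hB with ⟨-, h⟩ | ⟨h, -⟩
  · simpa [he] using h.le (x := e)
  · obtain ⟨g, hg⟩ := card_pos.mp (h ▸ one_pos)
    exact ⟨g, mem_beginsAt.mp hg⟩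

theorem exists_snd_eq_fst (hE : IsFlow E A B) {g : ℤ × ℤ} (hg : g ∈ E) (hA : g.1 ∉ A)
    (hB : g.1 ∉ B) : ∃ f ∈ E, f.2 = g.1 := by
  rcases hE.transit g.1 hA hB with ⟨h, -⟩ | ⟨-, h⟩
  · simpa [hg] using h.le (x := g)
  · obtain ⟨f, hf⟩ := card_pos.mp (h ▸ one_pos)
    exact ⟨f, mem_endsAt.mp hf⟩

theorem exists_snd_eq_of_prefix_subset (hE : IsFlow E A B) (hE' : IsFlow E' A B)
    {u v : List (ℤ × ℤ)} {e : ℤ × ℤ} (hd : DescList (u ++ e :: v))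
    (hl : (u ++ e :: v).toFinset = E) (hu : ∀ f ∈ u, f ∈ E') : ∃ f ∈ E', f.2 = e.2 := by
  have he : e ∈ E := by simp [← hl]
  by_cases hB : e.2 ∈ B
  · exact hE'.exists_snd_eq_of_mem_sinks hB
  obtain ⟨g, hg, hge⟩ := hE.exists_fst_eq_snd he hB
  have hgu : g ∈ u := hd.mem_left_of_snd_lt (by rwa [← List.mem_toFinset, hl]) (hge ▸ hE.edge_lt g hg)
  simpa [hge] using hE'.exists_snd_eq_fst (hu g hgu) (hge ▸ hE.snd_notMem_sources he) (hge ▸ hB)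

end IsFlow

namespace IsFlow

variable {E E' : FlowGraph} {A B : Finset ℤ} {l l' u v v' w : List (ℤ × ℤ)} {e e' : ℤ × ℤ}

theorem exists_mem_snd_eq_of_prefix (hE : IsFlow E A B) (hE' : IsFlow E' A B)
    (hd : DescList (u ++ e :: v)) (hl : (u ++ e :: v).toFinset = E)
    (hl' : (u ++ w).toFinset = E') : ∃ f ∈ w, f.2 = e.2 := by
  obtain ⟨f, hf, hfe⟩ := hE.exists_snd_eq_of_prefix_subset hE' hd hl fun f hf => by simp [← hl', hf]
  rw [← hl', List.mem_toFinset, List.mem_append] at hf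
  exact ⟨f, hf.resolve_left fun hfu => (hd.snd_lt_of_mem_left hfu).ne' hfe, hfe⟩

theorem not_prefix (hE : IsFlow E A B) (hE' : IsFlow E' A B) (hne : E ≠ E') (hd' : DescList l')
    (hl : l.toFinset = E) (hl' : l'.toFinset = E') : ¬ l <+: l' := by
  rintro ⟨_ | ⟨g, w⟩, rfl⟩
  · exact hne (by simpa [hl] using hl')
  · obtain ⟨f, hf, -⟩ := hE'.exists_mem_snd_eq_of_prefix hE hd' hl' (w := []) (by simpa using hl)
    simp at hf

theorem snd_eq_of_append_cons (hE : IsFlow E A B) (hE' : IsFlow E' A B)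
    (hd : DescList (u ++ e :: v)) (hd' : DescList (u ++ e' :: v'))
    (hl : (u ++ e :: v).toFinset = E) (hl' : (u ++ e' :: v').toFinset = E') : e.2 = e'.2 := by
  obtain ⟨f, hf, hfe⟩ := hE.exists_mem_snd_eq_of_prefix hE' hd hl hl'
  obtain ⟨f', hf', hfe'⟩ := hE'.exists_mem_snd_eq_of_prefix hE hd' hl' hl
  have := hd'.snd_le_of_mem_right hf
  have := hd.snd_le_of_mem_right hf'
  omega

theorem exists_first_difference (hE : IsFlow E A B) (hE' : IsFlow E' A B) (hne : E ≠ E')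
    (hd : DescList l) (hd' : DescList l') (hl : l.toFinset = E) (hl' : l'.toFinset = E') :
    ∃ (u v v' : List (ℤ × ℤ)) (e e' : ℤ × ℤ),
      l = u ++ e :: v ∧ l' = u ++ e' :: v' ∧ e ≠ e' ∧ e.2 = e'.2 ∧ e.1 ≠ e'.1 := by
  rcases List.prefix_or_prefix_or_exists_ne l l' with h | h | ⟨u, e, v, e', v', rfl, rfl, hee'⟩
  · exact absurd h (hE.not_prefix hE' hne hd' hl hl')
  · exact absurd h (hE'.not_prefix hE hne.symm hd hl' hl)
  have h2 := hE.snd_eq_of_append_cons hE' hd hd' hl hl'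
  exact ⟨u, v, v', e, e', rfl, rfl, hee', h2, fun h1 => hee' (Prod.ext h1 h2)⟩

end IsFlow

theorem flowLt_irrefl (E : FlowGraph) : ¬ FlowLt E E := by
  rintro ⟨u, v, v', e, e', hd, hd', hl, hl', hlt⟩
  have := List.append_cancel_left (hd.eq_of_toFinset_eq hd' (hl.trans hl'.symm))
  simp only [List.cons.injEq] at this
  exact hlt.ne (congrArg Prod.fst this.1).symm

theorem FlowLt.trans {E₁ E₂ E₃ : FlowGraph} (h₁₂ : FlowLt E₁ E₂) (h₂₃ : FlowLt E₂ E₃) :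
    FlowLt E₁ E₃ := by
  obtain ⟨u, v, v', e, e', hd₁, hd₂, hl₁, hl₂, hlt⟩ := h₁₂
  obtain ⟨w, x, x', f, f', hd₂', hd₃, hl₂', hl₃, hlt'⟩ := h₂₃
  rcases List.append_cons_eq_append_cons (hd₂.eq_of_toFinset_eq hd₂' (hl₂.trans hl₂'.symm)) with
    ⟨rfl, rfl⟩ | ⟨m, rfl⟩ | ⟨m, rfl⟩
  · exact ⟨u, v, x', e, f', hd₁, hd₃, hl₁, hl₃, hlt'.trans hlt⟩
  · simp only [List.append_assoc, List.cons_append] at hd₃ hl₃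
    exact ⟨u, v, m ++ f' :: x', e, e', hd₁, hd₃, hl₁, hl₃, hlt⟩
  · simp only [List.append_assoc, List.cons_append] at hd₁ hl₁
    exact ⟨w, m ++ e :: v, x', f, f', hd₁, hd₃, hl₁, hl₃, hlt'⟩

theorem IsFlow.flowLt_or_flowLt {E E' : FlowGraph} {A B : Finset ℤ} (hE : IsFlow E A B)
    (hE' : IsFlow E' A B) (hne : E ≠ E') : FlowLt E E' ∨ FlowLt E' E := by
  obtain ⟨l, hd, hl⟩ := hE.exists_descList
  obtain ⟨l', hd', hl'⟩ := hE'.exists_descList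
  obtain ⟨u, v, v', e, e', rfl, rfl, -, -, h1⟩ := hE.exists_first_difference hE' hne hd hd' hl hl'
  rcases h1.lt_or_gt with hlt | hgt
  · exact Or.inr ⟨u, v', v, e', e, hd', hd, hl', hl, hlt⟩
  · exact Or.inl ⟨u, v, v', e, e', hd, hd', hl, hl', hgt⟩

theorem statement12_general {q : ℕ} (i : ℤ) (a b : Fin q → ℤ) :
    (∀ E E' : FlowGraph, InF i a b E → InF i a b E' → E ≠ E' →
      ∀ l l' : List (ℤ × ℤ), DescList l → DescList l' →
        l.toFinset = E → l'.toFinset = E' →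
        (¬ l <+: l') ∧ (¬ l' <+: l) ∧
        ∃ (u v v' : List (ℤ × ℤ)) (e e' : ℤ × ℤ),
          l = u ++ e :: v ∧ l' = u ++ e' :: v' ∧
          e ≠ e' ∧ e.2 = e'.2 ∧ e.1 ≠ e'.1) ∧
    (∀ E : FlowGraph, InF i a b E → ¬ FlowLt E E) ∧
    (∀ E₁ E₂ E₃ : FlowGraph, InF i a b E₁ → InF i a b E₂ → InF i a b E₃ →
      FlowLt E₁ E₂ → FlowLt E₂ E₃ → FlowLt E₁ E₃) ∧
    (∀ E E' : FlowGraph, InF i a b E → InF i a b E' → E ≠ E' →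
      (FlowLt E E' ↔ ¬ FlowLt E' E)) := by
  refine ⟨fun E E' hE hE' hne l l' hd hd' hl hl' => ?_,
    fun E _ => flowLt_irrefl E,
    fun _ _ _ _ _ _ => FlowLt.trans,
    fun E E' hE hE' hne => ⟨fun h h' => flowLt_irrefl E (h.trans h'),
      (hE.1.flowLt_or_flowLt hE'.1 hne).resolve_right⟩⟩
  exact ⟨hE.1.not_prefix hE'.1 hne hd' hl hl', hE'.1.not_prefix hE.1 hne.symm hd hl' hl,
    hE.1.exists_first_difference hE'.1 hne hd hd' hl hl'⟩

/-- Section 3.6: for distinct flows `Γ, Γ' ∈ 𝓕_i(a_1,…,a_q; b_1,…,b_q)` with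
edges enumerated with strictly decreasing ends, neither enumeration is a proper
initial segment of the other; at the first index where they differ the edges
have equal ends and distinct beginnings. Consequently `FlowLt` is a strict
linear order on `𝓕_i(a_1,…,a_q; b_1,…,b_q)`. -/
theorem statement12 {q : ℕ} (i : ℤ) (a b : Fin q → ℤ)
    (ha : StrictMono a) (hb : StrictAnti b)
    (hai : ∀ j, a j ≤ i) (hbi : ∀ j, i < b j) :
    (∀ E E' : FlowGraph, InF i a b E → InF i a b E' → E ≠ E' →
      ∀ l l' : List (ℤ × ℤ), DescList l → DescList l' →
        l.toFinset = E → l'.toFinset = E' →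
        (¬ l <+: l') ∧ (¬ l' <+: l) ∧
        ∃ (u v v' : List (ℤ × ℤ)) (e e' : ℤ × ℤ),
          l = u ++ e :: v ∧ l' = u ++ e' :: v' ∧
          e ≠ e' ∧ e.2 = e'.2 ∧ e.1 ≠ e'.1) ∧
    (∀ E : FlowGraph, InF i a b E → ¬ FlowLt E E) ∧
    (∀ E₁ E₂ E₃ : FlowGraph, InF i a b E₁ → InF i a b E₂ → InF i a b E₃ →
      FlowLt E₁ E₂ → FlowLt E₂ E₃ → FlowLt E₁ E₃) ∧
    (∀ E E' : FlowGraph, InF i a b E → InF i a b E' → E ≠ E' →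
      (FlowLt E E' ↔ ¬ FlowLt E' E)) :=
  statement12_general i a b
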